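/- Triangle-style counting syllogism: for finite sets A, B, C, if |A ∩ C| > |B ∩ C| ('more A than B are C') and |B ∩ A| > |C ∩ A| ('more B than C are A'), then |A ∩ B| > |C ∩ B| ('more A than C are B'). -/
import Mathlib

theorem counting_syllogism {α : Type*} [DecidableEq α] (A B C : Finset α)
    (h1 : (B ∩ C).card < (A ∩ C).card)
    (h2 : (C ∩ A).card < (B ∩ A).card) :
    (C ∩ B).card < (A ∩ B).card := by
  have e1 := Finset.card_inter_add_card_sdiff (A ∩ C) B
  have e2 := Finset.card_inter_add_card_sdiff (B ∩ C) A
  have e3 := Finset.card_inter_add_card_sdiff (B ∩ A) C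
  have e4 := Finset.card_inter_add_card_sdiff (C ∩ A) B
  have e5 := Finset.card_inter_add_card_sdiff (A ∩ B) C
  have e6 := Finset.card_inter_add_card_sdiff (C ∩ B) A
  rw [show A ∩ C ∩ B = A ∩ B ∩ C by ext x; simp; tauto] at e1
  rw [show B ∩ C ∩ A = A ∩ B ∩ C by ext x; simp; tauto, show B ∩ C = C ∩ B from Finset.inter_comm _ _] at e2
  rw [show B ∩ A ∩ C = A ∩ B ∩ C by ext x; simp; tauto, show B ∩ A = A ∩ B from Finset.inter_comm _ _] at e3
  rw [show C ∩ A ∩ B = A ∩ B ∩ C by ext x; simp; tauto, show C ∩ A = A ∩ C from Finset.inter_comm _ _] at e4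
  rw [show C ∩ B ∩ A = A ∩ B ∩ C by ext x; simp; tauto] at e6
  rw [show B ∩ C = C ∩ B from Finset.inter_comm _ _] at h1
  rw [show C ∩ A = A ∩ C from Finset.inter_comm _ _, show B ∩ A = A ∩ B from Finset.inter_comm _ _] at h2
  omega
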